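/- arXiv:2307.05103 — 3 statements merged into one kernel-verified Lean document; each statement's English description precedes it below -/
import Mathlib

section
/- Let M⋆ be the Markov path measure with transitions π⋆(t)(i,j) = A(i,j)φ(t+1,j)/φ(t,i) and initial marginal μ₀, where (φ,φ̂) solves the Schrödinger system with positive φ and boundary conditions φ(0,·)φ̂(0,·) = μ₀, φ(N,·)φ̂(N,·) = μ_N. Then the time-N marginal of M⋆ equals μ_N. -/
/-- the Schrödinger bridge M⋆, obtained by propagating μ₀ through
the twisted kernels π⋆(t)(i,j) = A(i,j)φ(t+1,j)/φ(t,i), has time-N marginal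
equal to μ_N. -/
theorem schroedinger_bridge_hits_terminal_marginal (n N : ℕ)
    (A : Matrix (Fin n) (Fin n) ℝ)
    (hAnn : ∀ i j, 0 ≤ A i j) (hArow : ∀ i, ∑ j, A i j = 1)
    (φ φhat : Fin (N + 1) → Fin n → ℝ)
    (hφpos : ∀ t i, 0 < φ t i)
    (hφ : ∀ (t : Fin N) (i : Fin n), φ t.castSucc i = ∑ j, A i j * φ t.succ j)
    (hφhat : ∀ (t : Fin N) (j : Fin n),
      φhat t.succ j = ∑ i, A i j * φhat t.castSucc i)
    (μ₀ μN : Fin n → ℝ)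
    (h0 : ∀ i, φ 0 i * φhat 0 i = μ₀ i)
    (hN : ∀ i, φ (Fin.last N) i * φhat (Fin.last N) i = μN i)
    -- p is the marginal flow of M⋆: p₀ = μ₀ propagated through π⋆
    (p : Fin (N + 1) → Fin n → ℝ)
    (hp0 : ∀ i, p 0 i = μ₀ i)
    (hprop : ∀ (t : Fin N) (j : Fin n),
      p t.succ j = ∑ i, p t.castSucc i *
        (A i j * φ t.succ j / φ t.castSucc i)) :
    ∀ j, p (Fin.last N) j = μN j := by
  have key : ∀ (t : ℕ) (ht : t ≤ N) (i : Fin n),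
      p ⟨t, Nat.lt_succ_of_le ht⟩ i = φ ⟨t, Nat.lt_succ_of_le ht⟩ i *
        φhat ⟨t, Nat.lt_succ_of_le ht⟩ i := by
    intro t
    induction t with
    | zero => intro _ i; rw [show (⟨0, _⟩ : Fin (N+1)) = 0 from rfl, hp0, h0]
    | succ t ih =>
      intro ht j
      have htN : t < N := ht
      have hcast : (⟨t+1, Nat.lt_succ_of_le ht⟩ : Fin (N+1)) =
          (⟨t, htN⟩ : Fin N).succ := rfl
      have hcast' : (⟨t, Nat.lt_succ_of_le (Nat.le_of_lt htN)⟩ : Fin (N+1)) =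
          (⟨t, htN⟩ : Fin N).castSucc := rfl
      rw [hcast, hprop, hφhat, Finset.mul_sum]
      apply Finset.sum_congr rfl
      intro i _
      rw [← hcast', ih (Nat.le_of_lt htN)]
      have hpos := (hφpos ⟨t, Nat.lt_succ_of_le (Nat.le_of_lt htN)⟩ i).ne'
      rw [hcast'] at hpos
      have gen : ∀ a b c d : ℝ, a ≠ 0 → a * b * (c * d / a) = d * (c * b) := by
        intros a b c d ha; field_simp
      exact gen _ _ _ _ hpos
  have := key N le_rfl
  intro j
  have hl : (Fin.last N) = (⟨N, Nat.lt_succ_of_le le_rfl⟩ : Fin (N+1)) := rfl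
  rw [hl, this j, ← hl, hN]
end

section
/- With the augmented Schrödinger system as above and boundary conditions φ₀·φ̂₀ = μ₀ (entrywise), ψ₀ψ̂₀ = 1 − μ₀ᵀ𝟙, φ_N·φ̂_N = μ_N, ψ_N ψ̂_N = 1 − μ_Nᵀ𝟙, the marginal flow μ̂_t = [φ_t·φ̂_t ; ψ_t ψ̂_t] is a probability vector for every t = 0,…,N: its entries are nonnegative and sum to 1. -/
/-- in the augmented Schrödinger system with creation and
killing, with boundary conditions φ₀·φ̂₀ = μ₀, ψ₀ψ̂₀ = 1 − μ₀ᵀ𝟙,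
φ_N·φ̂_N = μ_N, ψ_Nψ̂_N = 1 − μ_Nᵀ𝟙, the marginal flow
μ̂_t = [φ_t·φ̂_t ; ψ_tψ̂_t] is a probability vector for every t. -/
theorem augmented_marginal_flow_is_probability (n N : ℕ)
    (A : Matrix (Fin n) (Fin n) ℝ) (c : Fin n → ℝ)
    (hAnn : ∀ i j, 0 ≤ A i j) (hArow : ∀ i, ∑ j, A i j ≤ 1)
    (hc : ∀ i, 0 ≤ c i) (hc1 : ∑ i, c i ≤ 1)
    (b : Fin n → ℝ) (hb : ∀ i, b i = 1 - ∑ j, A i j)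
    (d : ℝ) (hd : d = 1 - ∑ i, c i)
    (μ₀ μN : Fin n → ℝ)
    (hμ₀nn : ∀ i, 0 ≤ μ₀ i) (hμ₀sub : ∑ i, μ₀ i ≤ 1)
    (hμNnn : ∀ i, 0 ≤ μN i) (hμNsub : ∑ i, μN i ≤ 1)
    (φ : Fin (N + 1) → Fin n → ℝ) (ψ : Fin (N + 1) → ℝ)
    (φhat : Fin (N + 1) → Fin n → ℝ) (ψhat : Fin (N + 1) → ℝ)
    (hφpos : ∀ t i, 0 < φ t i) (hψpos : ∀ t, 0 < ψ t)
    (hφhatpos : ∀ t i, 0 < φhat t i) (hψhatpos : ∀ t, 0 < ψhat t)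
    (hφ : ∀ (t : Fin N) (i : Fin n),
      φ t.castSucc i = (∑ j, A i j * φ t.succ j) + b i * ψ t.succ)
    (hψ : ∀ t : Fin N,
      ψ t.castSucc = (∑ j, c j * φ t.succ j) + d * ψ t.succ)
    (hφhat : ∀ (t : Fin N) (j : Fin n),
      φhat t.succ j = (∑ i, A i j * φhat t.castSucc i) + c j * ψhat t.castSucc)
    (hψhat : ∀ t : Fin N,
      ψhat t.succ = (∑ i, b i * φhat t.castSucc i) + d * ψhat t.castSucc)
    (h0 : ∀ i, φ 0 i * φhat 0 i = μ₀ i)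
    (h0p : ψ 0 * ψhat 0 = 1 - ∑ i, μ₀ i)
    (hNb : ∀ i, φ (Fin.last N) i * φhat (Fin.last N) i = μN i)
    (hNp : ψ (Fin.last N) * ψhat (Fin.last N) = 1 - ∑ i, μN i) :
    ∀ t : Fin (N + 1),
      (∀ i, 0 ≤ φ t i * φhat t i) ∧ 0 ≤ ψ t * ψhat t ∧
      (∑ i, φ t i * φhat t i) + ψ t * ψhat t = 1 := by
  have key : ∀ t : Fin N,
      (∑ i, φ t.succ i * φhat t.succ i) + ψ t.succ * ψhat t.succ
      = (∑ i, φ t.castSucc i * φhat t.castSucc i) + ψ t.castSucc * ψhat t.castSucc := by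
    intro t
    calc (∑ j, φ t.succ j * φhat t.succ j) + ψ t.succ * ψhat t.succ
        = (∑ j, φ t.succ j * ((∑ i, A i j * φhat t.castSucc i) + c j * ψhat t.castSucc))
          + ψ t.succ * ((∑ i, b i * φhat t.castSucc i) + d * ψhat t.castSucc) := by
          simp_rw [hφhat t, hψhat t]
      _ = (∑ i, ((∑ j, A i j * φ t.succ j) + b i * ψ t.succ) * φhat t.castSucc i)
          + ((∑ j, c j * φ t.succ j) + d * ψ t.succ) * ψhat t.castSucc := by
          simp only [Finset.mul_sum, Finset.sum_mul, mul_add, add_mul, Finset.sum_add_distrib]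
          rw [Finset.sum_comm]
          ring_nf
          simp only [mul_comm, mul_left_comm, mul_assoc]
          ring_nf
      _ = (∑ i, φ t.castSucc i * φhat t.castSucc i) + ψ t.castSucc * ψhat t.castSucc := by
          simp_rw [← hφ t, ← hψ t]
  have sum1 : ∀ t : Fin (N + 1),
      (∑ i, φ t i * φhat t i) + ψ t * ψhat t = 1 := by
    intro t
    induction t using Fin.induction with
    | zero => simp only [h0, h0p]; ring
    | succ t ih => rw [key t, ih]
  intro t
  exact ⟨fun i => le_of_lt (mul_pos (hφpos t i) (hφhatpos t i)),
    le_of_lt (mul_pos (hψpos t) (hψhatpos t)), sum1 t⟩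
end

section
/- Suppose M⋆ solves min KL(M‖Q) over probability measures on V^{N+1} with fixed marginals μ₀ at time 0 and μ_N at time N, where Q is a Markov measure with strictly positive transition kernel A and strictly positive initial law ν₀. Then M⋆ is itself Markov: there exist transition kernels π⋆(t) such that M⋆(i₀,…,i_N) = μ₀(i₀)∏_t π⋆(t)(i_t,i_{t+1}). -/
/-!
Let `M'` be the Markov measure with the initial law of `M⋆` and its one-step conditional laws
`π t i j = M⋆(x_{t+1} = j | x_t = i)` (any stochastic row where `M⋆` never visits `i` at time `t`).
By construction `M'` has the same time-zero law and the same laws of consecutive pairs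
`(x_t, x_{t+1})` as `M⋆`, hence the same endpoint marginals, so it competes with `M⋆`.
Since `log (M' / Q)` is a function of `x₀` plus a sum of functions of consecutive pairs, its
expectations under `M⋆` and under `M'` coincide, which is the Pythagorean identity
`KL(M⋆‖Q) = KL(M⋆‖M') + KL(M'‖Q)`. Optimality of `M⋆` forces `KL(M⋆‖M') ≤ 0`, and Gibbs'
inequality then gives `M⋆ = M'`.
-/

/-- Relative entropy on a finite set, with the convention `0 · log 0 = 0`. -/
noncomputable def KLdiv {X : Type*} [Fintype X] (P R : X → ℝ) : ℝ :=
  ∑ x, P x * Real.log (P x / R x)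

open Finset

namespace PathMeasure

section Pushforward

variable {X Y Z : Type*} [Fintype X] [DecidableEq Y] [DecidableEq Z]

def pushforward (f : X → Y) (M : X → ℝ) (y : Y) : ℝ :=
  ∑ x, if f x = y then M x else 0

lemma sum_pushforward_mul [Fintype Y] (f : X → Y) (M : X → ℝ) (g : Y → ℝ) :
    ∑ y, pushforward f M y * g y = ∑ x, M x * g (f x) := by
  simp only [pushforward, sum_mul, ite_mul, zero_mul]
  rw [sum_comm]
  exact sum_congr rfl fun x _ => by simp

lemma sum_pushforward [Fintype Y] (f : X → Y) (M : X → ℝ) :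
    ∑ y, pushforward f M y = ∑ x, M x := by
  simpa using sum_pushforward_mul f M 1

lemma pushforward_comp [Fintype Y] (g : Y → Z) (f : X → Y) (M : X → ℝ) :
    pushforward g (pushforward f M) = pushforward (g ∘ f) M := by
  ext z
  simpa only [pushforward, Function.comp_apply, mul_ite, mul_one, mul_zero] using
    sum_pushforward_mul f M fun y => if g y = z then 1 else 0

lemma pushforward_nonneg {M : X → ℝ} (hM : 0 ≤ M) (f : X → Y) : 0 ≤ pushforward f M :=
  fun _ => sum_nonneg fun x _ => by split_ifs; exacts [hM x, le_rfl]

lemma le_pushforward {M : X → ℝ} (hM : 0 ≤ M) (f : X → Y) (x : X) :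
    M x ≤ pushforward f M (f x) := by
  simpa [pushforward] using single_le_sum (f := fun x' => if f x' = f x then M x' else 0)
    (fun x' _ => by split_ifs; exacts [hM x', le_rfl]) (mem_univ x)

lemma pushforward_fst_apply {A B : Type*} [Fintype A] [Fintype B] [DecidableEq A]
    (R : A × B → ℝ) (a : A) : pushforward Prod.fst R a = ∑ b, R (a, b) := by
  simp only [pushforward, Fintype.sum_prod_type]
  rw [sum_comm]
  simp

end Pushforward

section Paths

variable {V : Type*} {N : ℕ}

def markovWeight (w : V → ℝ) (π : Fin N → V → V → ℝ) (x : Fin (N + 1) → V) : ℝ :=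
  w (x 0) * ∏ t, π t (x t.castSucc) (x t.succ)

lemma markovWeight_snoc (w : V → ℝ) (π : Fin (N + 1) → V → V → ℝ) (y : Fin (N + 1) → V)
    (j : V) :
    markovWeight w π (Fin.snoc y j) =
      markovWeight w (fun t => π t.castSucc) y * π (Fin.last N) (y (Fin.last N)) j := by
  rw [markovWeight, markovWeight, Fin.prod_univ_castSucc, ← Fin.castSucc_zero, mul_assoc]
  simp only [Fin.succ_castSucc, Fin.snoc_castSucc, Fin.succ_last, Fin.snoc_last]

lemma markovWeight_nonneg {w : V → ℝ} {π : Fin N → V → V → ℝ} (hw : 0 ≤ w)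
    (hπ : ∀ t i j, 0 ≤ π t i j) : 0 ≤ markovWeight w π :=
  fun _ => mul_nonneg (hw _) (prod_nonneg fun t _ => hπ t _ _)

lemma sum_snoc [Fintype V] {α : Type*} [AddCommMonoid α] (F : (Fin (N + 1) → V) → α) :
    ∑ x, F x = ∑ y : Fin N → V, ∑ j, F (Fin.snoc y j) := by
  rw [← (Fin.snocEquiv fun _ => V).sum_comp, Fintype.sum_prod_type, sum_comm]
  rfl

variable [Fintype V] [DecidableEq V]

def marginal (M : (Fin (N + 1) → V) → ℝ) (t : Fin (N + 1)) : V → ℝ :=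
  pushforward (fun x => x t) M

def pairMarginal (M : (Fin (N + 1) → V) → ℝ) (t : Fin N) : V × V → ℝ :=
  pushforward (fun x => (x t.castSucc, x t.succ)) M

lemma sum_marginal (M : (Fin (N + 1) → V) → ℝ) (t : Fin (N + 1)) :
    ∑ i, marginal M t i = ∑ x, M x :=
  sum_pushforward _ M

lemma marginal_castSucc (M : (Fin (N + 2) → V) → ℝ) (t : Fin (N + 1)) :
    marginal M t.castSucc = marginal (pushforward Fin.init M) t := by
  rw [marginal, marginal, pushforward_comp]; rfl

lemma pairMarginal_castSucc (M : (Fin (N + 2) → V) → ℝ) (t : Fin N) :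
    pairMarginal M t.castSucc = pairMarginal (pushforward Fin.init M) t := by
  rw [pairMarginal, pairMarginal, pushforward_comp]; rfl

lemma marginal_succ (M : (Fin (N + 1) → V) → ℝ) (t : Fin N) :
    marginal M t.succ = pushforward Prod.snd (pairMarginal M t) := by
  rw [marginal, pairMarginal, pushforward_comp]; rfl

lemma sum_pairMarginal (M : (Fin (N + 1) → V) → ℝ) (t : Fin N) (i : V) :
    ∑ j, pairMarginal M t (i, j) = marginal M t.castSucc i := by
  rw [← pushforward_fst_apply, pairMarginal, pushforward_comp]
  rfl

lemma pushforward_init (M : (Fin (N + 1) → V) → ℝ) (y : Fin N → V) :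
    pushforward Fin.init M y = ∑ j, M (Fin.snoc y j) := by
  simp [pushforward, sum_snoc (fun x => if Fin.init x = y then M x else 0)]

lemma pushforward_init_markovWeight (w : V → ℝ) {π : Fin (N + 1) → V → V → ℝ}
    (hπ : ∀ t i, ∑ j, π t i j = 1) :
    pushforward Fin.init (markovWeight w π) = markovWeight w (fun t => π t.castSucc) := by
  ext y
  simp only [pushforward_init, markovWeight_snoc, ← mul_sum, hπ, mul_one]

lemma marginal_markovWeight_zero (w : V → ℝ) {π : Fin N → V → V → ℝ}
    (hπ : ∀ t i, ∑ j, π t i j = 1) : marginal (markovWeight w π) 0 = w := by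
  induction N with
  | zero =>
    ext i
    rw [marginal, pushforward, ← (Equiv.funUnique (Fin 1) V).symm.sum_comp]
    simp [markovWeight]
  | succ N ih =>
    rw [← Fin.castSucc_zero, marginal_castSucc, pushforward_init_markovWeight w hπ]
    exact ih fun t => hπ t.castSucc

lemma pairMarginal_markovWeight (w : V → ℝ) {π : Fin N → V → V → ℝ}
    (hπ : ∀ t i, ∑ j, π t i j = 1) (t : Fin N) (i j : V) :
    pairMarginal (markovWeight w π) t (i, j) =
      marginal (markovWeight w π) t.castSucc i * π t i j := by
  induction N with
  | zero => exact t.elim0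
  | succ N ih =>
    rw [marginal_castSucc, pushforward_init_markovWeight w hπ]
    cases t using Fin.lastCases with
    | cast s =>
      rw [pairMarginal_castSucc, pushforward_init_markovWeight w hπ]
      exact ih (fun t => hπ t.castSucc) s
    | last =>
      simp only [pairMarginal, marginal, pushforward, sum_snoc (N := N + 1), Fin.snoc_castSucc,
        Fin.succ_last, Fin.snoc_last, Prod.mk.injEq, markovWeight_snoc, sum_mul, ite_mul, zero_mul]
      refine sum_congr rfl fun y _ => ?_
      split_ifs with h <;> simp [h]

end Paths

section Markovization

variable {V : Type*} [Fintype V] [DecidableEq V] {N : ℕ} {M : (Fin (N + 1) → V) → ℝ}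
  {D : V → V → ℝ}

noncomputable def condKernel (M : (Fin (N + 1) → V) → ℝ) (D : V → V → ℝ) (t : Fin N)
    (i j : V) : ℝ :=
  if marginal M t.castSucc i = 0 then D i j else pairMarginal M t (i, j) / marginal M t.castSucc i

noncomputable def markovization (M : (Fin (N + 1) → V) → ℝ) (D : V → V → ℝ) :
    (Fin (N + 1) → V) → ℝ :=
  markovWeight (marginal M 0) (condKernel M D)

lemma condKernel_nonneg (hM : 0 ≤ M) (hD : ∀ i j, 0 ≤ D i j) (t : Fin N) (i j : V) :
    0 ≤ condKernel M D t i j := by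
  unfold condKernel
  split_ifs
  exacts [hD i j, div_nonneg (pushforward_nonneg hM _ _) (pushforward_nonneg hM _ _)]

lemma sum_condKernel (hD : ∀ i, ∑ j, D i j = 1) (t : Fin N) (i : V) :
    ∑ j, condKernel M D t i j = 1 := by
  by_cases h : marginal M t.castSucc i = 0
  · simp only [condKernel, h, if_true, hD]
  · simp only [condKernel, h, if_false, ← sum_div, sum_pairMarginal, div_self h]

lemma marginal_mul_condKernel (hM : 0 ≤ M) (D : V → V → ℝ) (t : Fin N) (i j : V) :
    marginal M t.castSucc i * condKernel M D t i j = pairMarginal M t (i, j) := by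
  by_cases h : marginal M t.castSucc i = 0
  · have hle : pairMarginal M t (i, j) ≤ marginal M t.castSucc i :=
      sum_pairMarginal M t i ▸
        single_le_sum (fun j _ => pushforward_nonneg hM _ (i, j)) (mem_univ j)
    rw [h] at hle
    rw [h, zero_mul]
    exact (le_antisymm hle (pushforward_nonneg hM _ _)).symm
  · rw [condKernel, if_neg h, mul_div_cancel₀ _ h]

lemma markovization_nonneg (hM : 0 ≤ M) (hD : ∀ i j, 0 ≤ D i j) : 0 ≤ markovization M D :=
  markovWeight_nonneg (pushforward_nonneg hM _) (condKernel_nonneg hM hD)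

lemma markovization_ne_zero (hM : 0 ≤ M) {x : Fin (N + 1) → V} (hx : M x ≠ 0) :
    markovization M D x ≠ 0 := by
  have hx : 0 < M x := (hM x).lt_of_ne' hx
  have hmarg : ∀ t, 0 < marginal M t (x t) := fun t => hx.trans_le (le_pushforward hM _ x)
  have hpair : ∀ t, 0 < pairMarginal M t (x t.castSucc, x t.succ) :=
    fun t => hx.trans_le (le_pushforward hM _ x)
  refine mul_ne_zero (hmarg 0).ne' (prod_ne_zero_iff.mpr fun t _ => ?_)
  rw [condKernel, if_neg (hmarg _).ne']
  exact (div_pos (hpair t) (hmarg _)).ne'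

lemma pairMarginal_markovization_of_marginal (hM : 0 ≤ M) (hD : ∀ i, ∑ j, D i j = 1)
    (t : Fin N) (h : marginal (markovization M D) t.castSucc = marginal M t.castSucc) :
    pairMarginal (markovization M D) t = pairMarginal M t := by
  ext ⟨i, j⟩
  rw [markovization, pairMarginal_markovWeight _ (sum_condKernel hD), ← markovization, h,
    marginal_mul_condKernel hM]

lemma marginal_markovization (hM : 0 ≤ M) (hD : ∀ i, ∑ j, D i j = 1) (t : Fin (N + 1)) :
    marginal (markovization M D) t = marginal M t := by
  induction t using Fin.induction with
  | zero => exact marginal_markovWeight_zero _ (sum_condKernel hD)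
  | succ s ih =>
    rw [marginal_succ, marginal_succ, pairMarginal_markovization_of_marginal hM hD s ih]

lemma pairMarginal_markovization (hM : 0 ≤ M) (hD : ∀ i, ∑ j, D i j = 1) (t : Fin N) :
    pairMarginal (markovization M D) t = pairMarginal M t :=
  pairMarginal_markovization_of_marginal hM hD t (marginal_markovization hM hD _)

lemma sum_markovization (hM : 0 ≤ M) (hD : ∀ i, ∑ j, D i j = 1) :
    ∑ x, markovization M D x = ∑ x, M x := by
  rw [← sum_marginal _ 0, marginal_markovization hM hD, sum_marginal]

end Markovization

section RelativeEntropy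

variable {X : Type*} [Fintype X] {P R S : X → ℝ}

lemma KLdiv_eq_KLdiv_add (hRP : ∀ x, R x = 0 → P x = 0) (hS : ∀ x, S x ≠ 0) :
    KLdiv P S = KLdiv P R + ∑ x, P x * Real.log (R x / S x) := by
  rw [KLdiv, KLdiv, ← sum_add_distrib]
  refine sum_congr rfl fun x _ => ?_
  by_cases hP : P x = 0
  · simp [hP]
  have hR : R x ≠ 0 := fun h => hP (hRP x h)
  rw [← mul_add, ← Real.log_mul (div_ne_zero hP hR) (div_ne_zero hR (hS x)),
    div_mul_div_cancel₀ hR]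

lemma eq_of_KLdiv_nonpos (hP : 0 ≤ P) (hR : 0 ≤ R) (hsum : ∑ x, P x = ∑ x, R x)
    (hRP : ∀ x, R x = 0 → P x = 0) (hKL : KLdiv P R ≤ 0) : P = R := by
  set d : X → ℝ := fun x => R x * InformationTheory.klFun (P x / R x)
  have hd : ∀ x, 0 ≤ d x :=
    fun x => mul_nonneg (hR x) (InformationTheory.klFun_nonneg (div_nonneg (hP x) (hR x)))
  have hterm : ∀ x, P x * Real.log (P x / R x) = d x + (P x - R x) := by
    intro x
    by_cases h : R x = 0
    · simp [d, h, hRP x h]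
    · simp only [d, InformationTheory.klFun_apply]
      field_simp
      ring
  have hdsum : ∑ x, d x = KLdiv P R := by
    simp only [KLdiv, hterm, sum_add_distrib, sum_sub_distrib, hsum, sub_self, add_zero]
  have hd0 : ∀ x, d x = 0 := fun x =>
    (sum_eq_zero_iff_of_nonneg fun x _ => hd x).mp
      (le_antisymm (hdsum ▸ hKL) (sum_nonneg fun x _ => hd x)) x (mem_univ x)
  ext x
  by_cases h : R x = 0
  · rw [h, hRP x h]
  · have := (mul_eq_zero.mp (hd0 x)).resolve_left h
    rwa [InformationTheory.klFun_eq_zero_iff (div_nonneg (hP x) (hR x)),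
      div_eq_one_iff_eq h] at this

end RelativeEntropy

section MarkovRelativeEntropy

variable {V : Type*} {N : ℕ}

lemma markovWeight_div (w ν : V → ℝ) (π ρ : Fin N → V → V → ℝ) (x : Fin (N + 1) → V) :
    markovWeight w π x / markovWeight ν ρ x =
      markovWeight (fun i => w i / ν i) (fun t i j => π t i j / ρ t i j) x := by
  simp only [markovWeight, prod_div_distrib, div_mul_div_comm]

lemma log_markovWeight {w : V → ℝ} {π : Fin N → V → V → ℝ} {x : Fin (N + 1) → V}
    (h : markovWeight w π x ≠ 0) :
    Real.log (markovWeight w π x) =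
      Real.log (w (x 0)) + ∑ t, Real.log (π t (x t.castSucc) (x t.succ)) := by
  obtain ⟨hw, hπ⟩ := mul_ne_zero_iff.mp h
  rw [markovWeight, Real.log_mul hw hπ, Real.log_prod (prod_ne_zero_iff.mp hπ)]

variable [Fintype V] [DecidableEq V]

lemma sum_mul_eq_of_pairMarginal_eq {M M' : (Fin (N + 1) → V) → ℝ}
    (h0 : marginal M 0 = marginal M' 0) (hpair : ∀ t, pairMarginal M t = pairMarginal M' t)
    (f : V → ℝ) (g : Fin N → V → V → ℝ) :
    ∑ x, M x * (f (x 0) + ∑ t, g t (x t.castSucc) (x t.succ)) =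
      ∑ x, M' x * (f (x 0) + ∑ t, g t (x t.castSucc) (x t.succ)) := by
  have key : ∀ P : (Fin (N + 1) → V) → ℝ,
      ∑ x, P x * (f (x 0) + ∑ t, g t (x t.castSucc) (x t.succ)) =
        ∑ i, marginal P 0 i * f i + ∑ t, ∑ ij, pairMarginal P t ij * g t ij.1 ij.2 := by
    intro P
    simp only [mul_add, sum_add_distrib, mul_sum]
    congr 1
    · exact (sum_pushforward_mul _ P f).symm
    · rw [sum_comm]
      exact sum_congr rfl fun t _ =>
        (sum_pushforward_mul (fun x => (x t.castSucc, x t.succ)) P fun ij => g t ij.1 ij.2).symm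
  rw [key M, key M', h0]
  simp only [hpair]

theorem KLdiv_markovWeight_eq_add {M : (Fin (N + 1) → V) → ℝ} {w ν : V → ℝ}
    {π ρ : Fin N → V → V → ℝ} (hQ : ∀ x, markovWeight ν ρ x ≠ 0)
    (hsupp : ∀ x, markovWeight w π x = 0 → M x = 0)
    (h0 : marginal M 0 = marginal (markovWeight w π) 0)
    (hpair : ∀ t, pairMarginal M t = pairMarginal (markovWeight w π) t) :
    KLdiv M (markovWeight ν ρ) =
      KLdiv M (markovWeight w π) + KLdiv (markovWeight w π) (markovWeight ν ρ) := by
  have hlog : ∀ P : (Fin (N + 1) → V) → ℝ, (∀ x, markovWeight w π x = 0 → P x = 0) →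
      ∑ x, P x * Real.log (markovWeight w π x / markovWeight ν ρ x) =
        ∑ x, P x * (Real.log (w (x 0) / ν (x 0)) +
          ∑ t, Real.log (π t (x t.castSucc) (x t.succ) / ρ t (x t.castSucc) (x t.succ))) := by
    intro P hP
    refine sum_congr rfl fun x _ => ?_
    by_cases hx : markovWeight w π x = 0
    · simp [hP x hx]
    · rw [markovWeight_div, log_markovWeight (markovWeight_div w ν π ρ x ▸ div_ne_zero hx (hQ x))]
  rw [KLdiv_eq_KLdiv_add hsupp hQ, hlog M hsupp, sum_mul_eq_of_pairMarginal_eq h0 hpair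
    (fun i => Real.log (w i / ν i)) fun t i j => Real.log (π t i j / ρ t i j)]
  exact congrArg _ (hlog _ fun _ h => h).symm

end MarkovRelativeEntropy

end PathMeasure

open PathMeasure

theorem schroedinger_bridge_is_markov_general (n N : ℕ)
    (A : Matrix (Fin n) (Fin n) ℝ) (hApos : ∀ i j, 0 < A i j)
    (hArow : ∀ i, ∑ j, A i j = 1)
    (ν₀ : Fin n → ℝ) (hν₀pos : ∀ i, 0 < ν₀ i)
    (μ₀ μN : Fin n → ℝ)
    (Q : (Fin (N + 1) → Fin n) → ℝ)
    (hQ : ∀ x, Q x = ν₀ (x 0) * ∏ t : Fin N, A (x t.castSucc) (x t.succ))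
    (Mstar : (Fin (N + 1) → Fin n) → ℝ)
    (hMnn : ∀ x, 0 ≤ Mstar x) (hMsum : ∑ x, Mstar x = 1)
    (hM0 : ∀ i, (∑ x : Fin (N + 1) → Fin n,
      if x 0 = i then Mstar x else 0) = μ₀ i)
    (hMN : ∀ i, (∑ x : Fin (N + 1) → Fin n,
      if x (Fin.last N) = i then Mstar x else 0) = μN i)
    (hopt : ∀ M : (Fin (N + 1) → Fin n) → ℝ,
      (∀ x, 0 ≤ M x) → (∑ x, M x = 1) →
      (∀ i, (∑ x : Fin (N + 1) → Fin n, if x 0 = i then M x else 0) = μ₀ i) →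
      (∀ i, (∑ x : Fin (N + 1) → Fin n,
        if x (Fin.last N) = i then M x else 0) = μN i) →
      KLdiv Mstar Q ≤ KLdiv M Q) :
    ∃ π : Fin N → Matrix (Fin n) (Fin n) ℝ,
      (∀ t i j, 0 ≤ π t i j) ∧ (∀ t i, ∑ j, π t i j = 1) ∧
      ∀ x, Mstar x = μ₀ (x 0) *
        ∏ t : Fin N, π t (x t.castSucc) (x t.succ) := by
  have hAnn : ∀ i j, 0 ≤ A i j := fun i j => (hApos i j).le
  have hQ' : Q = markovWeight ν₀ fun _ : Fin N => A := funext hQ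
  have hQne : ∀ x, markovWeight ν₀ (fun _ : Fin N => A) x ≠ 0 :=
    fun x => (mul_pos (hν₀pos _) (prod_pos fun _ _ => hApos _ _)).ne'
  have hsupp : ∀ x, markovization Mstar A x = 0 → Mstar x = 0 :=
    fun x => not_imp_not.mp (markovization_ne_zero hMnn)
  have hmarg := marginal_markovization hMnn hArow
  have hM'sum : ∑ x, markovization Mstar A x = 1 := (sum_markovization hMnn hArow).trans hMsum
  have hpyth : KLdiv Mstar Q =
      KLdiv Mstar (markovization Mstar A) + KLdiv (markovization Mstar A) Q :=
    hQ' ▸ KLdiv_markovWeight_eq_add hQne hsupp (hmarg 0).symm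
      fun t => (pairMarginal_markovization hMnn hArow t).symm
  have hKLle := hopt _ (markovization_nonneg hMnn hAnn) hM'sum
    (fun i => (congrFun (hmarg 0) i).trans (hM0 i))
    (fun i => (congrFun (hmarg _) i).trans (hMN i))
  have hbridge : Mstar = markovization Mstar A :=
    eq_of_KLdiv_nonpos hMnn (markovization_nonneg hMnn hAnn) (hMsum.trans hM'sum.symm) hsupp
      (by linarith)
  refine ⟨condKernel Mstar A, condKernel_nonneg hMnn hAnn, sum_condKernel hArow, fun x => ?_⟩
  rw [congrFun hbridge x, ← funext hM0]
  rfl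

/-- the Schrödinger bridge inherits the Markov property — a
minimizer of KL(·‖Q) over probability measures on path space with fixed
time-0 marginal μ₀ and time-N marginal μ_N, where Q is Markov with strictly
positive kernel A and strictly positive initial law ν₀, is itself a Markov
path measure. -/
theorem schroedinger_bridge_is_markov (n N : ℕ)
    (A : Matrix (Fin n) (Fin n) ℝ) (hApos : ∀ i j, 0 < A i j)
    (hArow : ∀ i, ∑ j, A i j = 1)
    (ν₀ : Fin n → ℝ) (hν₀pos : ∀ i, 0 < ν₀ i) (hν₀sum : ∑ i, ν₀ i = 1)
    (μ₀ μN : Fin n → ℝ)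
    (Q : (Fin (N + 1) → Fin n) → ℝ)
    (hQ : ∀ x, Q x = ν₀ (x 0) * ∏ t : Fin N, A (x t.castSucc) (x t.succ))
    (Mstar : (Fin (N + 1) → Fin n) → ℝ)
    (hMnn : ∀ x, 0 ≤ Mstar x) (hMsum : ∑ x, Mstar x = 1)
    (hM0 : ∀ i, (∑ x : Fin (N + 1) → Fin n,
      if x 0 = i then Mstar x else 0) = μ₀ i)
    (hMN : ∀ i, (∑ x : Fin (N + 1) → Fin n,
      if x (Fin.last N) = i then Mstar x else 0) = μN i)
    (hopt : ∀ M : (Fin (N + 1) → Fin n) → ℝ,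
      (∀ x, 0 ≤ M x) → (∑ x, M x = 1) →
      (∀ i, (∑ x : Fin (N + 1) → Fin n, if x 0 = i then M x else 0) = μ₀ i) →
      (∀ i, (∑ x : Fin (N + 1) → Fin n,
        if x (Fin.last N) = i then M x else 0) = μN i) →
      KLdiv Mstar Q ≤ KLdiv M Q) :
    ∃ π : Fin N → Matrix (Fin n) (Fin n) ℝ,
      (∀ t i j, 0 ≤ π t i j) ∧ (∀ t i, ∑ j, π t i j = 1) ∧
      ∀ x, Mstar x = μ₀ (x 0) *
        ∏ t : Fin N, π t (x t.castSucc) (x t.succ) :=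
  schroedinger_bridge_is_markov_general n N A hApos hArow ν₀ hν₀pos μ₀ μN Q hQ Mstar hMnn hMsum hM0
    hMN hopt
end
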